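/- For all real numbers a and b, the integral over ℝ of x·Φ(a+bx)·φ(x) dx equals (b/√(1+b²))·φ(a/√(1+b²)). -/

import Mathlib

open Real MeasureTheory

/-- The standard normal probability density function. -/
noncomputable def stdNormalPDF (x : ℝ) : ℝ := Real.exp (-x ^ 2 / 2) / Real.sqrt (2 * Real.pi)

/-- The standard normal cumulative distribution function. -/
noncomputable def stdNormalCDF (t : ℝ) : ℝ := ∫ s in Set.Iic t, stdNormalPDF s

/-
The integrand has an explicit antiderivative. Since `φ'(x) = -x φ(x)`, integrating by parts reduces
the integral to `b ∫ φ(a + b x) φ(x) dx`, and completing the square with `c = √(1 + b²)` gives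
`φ(a + b x) φ(x) = φ(a / c) φ(c x + a b / c)`, which integrates to `φ(a / c) / c`. Both steps are
realised by differentiating `G(y) = (b / c) φ(a / c) Φ(c y + a b / c) - Φ(a + b y) φ(y)`, which tends
to `0` at `-∞` and to `(b / c) φ(a / c)` at `+∞`.
-/

open Filter Topology Set ProbabilityTheory

lemma stdNormalPDF_eq_gaussianPDFReal : stdNormalPDF = gaussianPDFReal 0 1 := by
  ext x
  simp [stdNormalPDF, gaussianPDFReal, div_eq_inv_mul]

lemma stdNormalPDF_nonneg (x : ℝ) : 0 ≤ stdNormalPDF x :=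
  stdNormalPDF_eq_gaussianPDFReal ▸ gaussianPDFReal_nonneg 0 1 x

lemma integrable_stdNormalPDF : Integrable stdNormalPDF :=
  stdNormalPDF_eq_gaussianPDFReal ▸ integrable_gaussianPDFReal 0 1

@[fun_prop]
lemma continuous_stdNormalPDF : Continuous stdNormalPDF := by
  unfold stdNormalPDF
  fun_prop

lemma hasDerivAt_stdNormalPDF (x : ℝ) : HasDerivAt stdNormalPDF (-x * stdNormalPDF x) x := by
  have hexp : HasDerivAt (fun y : ℝ => -y ^ 2 / 2) (-x) x := by
    refine ((hasDerivAt_pow 2 x).neg.div_const 2).congr_deriv ?_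
    push_cast
    ring
  unfold stdNormalPDF
  exact (hexp.exp.div_const (√(2 * π))).congr_deriv (by ring)

lemma integrable_mul_stdNormalPDF : Integrable fun x => x * stdNormalPDF x := by
  have := (integrable_mul_exp_neg_mul_sq (by norm_num : (0:ℝ) < 1 / 2)).div_const (√(2 * π))
  convert this using 2 with x
  simp only [stdNormalPDF]
  ring_nf

lemma tendsto_stdNormalPDF_cocompact : Tendsto stdNormalPDF (cocompact ℝ) (𝓝 0) := by
  have hsq : Tendsto (fun x : ℝ => -x ^ 2 / 2) (cocompact ℝ) atBot := by
    have hnorm := (tendsto_pow_atTop two_ne_zero).comp (tendsto_norm_cocompact_atTop (E := ℝ))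
    simpa [Function.comp_def, neg_div] using
      tendsto_neg_atTop_atBot.comp (hnorm.atTop_div_const two_pos)
  unfold stdNormalPDF
  rw [← zero_div (√(2 * π))]
  exact (tendsto_exp_atBot.comp hsq).div_const (√(2 * π))

lemma stdNormalCDF_eq_cdf_gaussianReal : stdNormalCDF = cdf (gaussianReal 0 1) := by
  ext t
  rw [cdf_eq_real, measureReal_def, gaussianReal_apply_eq_integral _ one_ne_zero,
    ENNReal.toReal_ofReal
      (setIntegral_nonneg measurableSet_Iic fun x _ => gaussianPDFReal_nonneg _ _ x),
    stdNormalCDF, stdNormalPDF_eq_gaussianPDFReal]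

lemma hasDerivAt_stdNormalCDF (t : ℝ) : HasDerivAt stdNormalCDF (stdNormalPDF t) t := by
  have heq : stdNormalCDF = fun u => stdNormalCDF 0 + ∫ x in (0:ℝ)..u, stdNormalPDF x := by
    ext u
    rw [← intervalIntegral.integral_Iic_sub_Iic integrable_stdNormalPDF.integrableOn
      integrable_stdNormalPDF.integrableOn, stdNormalCDF, stdNormalCDF]
    ring
  rw [heq]
  exact (intervalIntegral.integral_hasDerivAt_right integrable_stdNormalPDF.intervalIntegrable
    continuous_stdNormalPDF.aestronglyMeasurable.stronglyMeasurableAtFilter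
    continuous_stdNormalPDF.continuousAt).const_add _

@[fun_prop]
lemma continuous_stdNormalCDF : Continuous stdNormalCDF :=
  continuous_iff_continuousAt.2 fun t => (hasDerivAt_stdNormalCDF t).continuousAt

lemma stdNormalCDF_nonneg (t : ℝ) : 0 ≤ stdNormalCDF t :=
  stdNormalCDF_eq_cdf_gaussianReal ▸ cdf_nonneg _ t

lemma stdNormalCDF_le_one (t : ℝ) : stdNormalCDF t ≤ 1 :=
  stdNormalCDF_eq_cdf_gaussianReal ▸ cdf_le_one _ t

lemma tendsto_stdNormalCDF_atBot : Tendsto stdNormalCDF atBot (𝓝 0) :=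
  stdNormalCDF_eq_cdf_gaussianReal ▸ tendsto_cdf_atBot _

lemma tendsto_stdNormalCDF_atTop : Tendsto stdNormalCDF atTop (𝓝 1) :=
  stdNormalCDF_eq_cdf_gaussianReal ▸ tendsto_cdf_atTop _

lemma abs_stdNormalCDF_mul_stdNormalPDF_le (t x : ℝ) :
    |stdNormalCDF t * stdNormalPDF x| ≤ stdNormalPDF x := by
  rw [abs_of_nonneg (mul_nonneg (stdNormalCDF_nonneg t) (stdNormalPDF_nonneg x))]
  exact mul_le_of_le_one_left (stdNormalPDF_nonneg x) (stdNormalCDF_le_one t)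

lemma tendsto_stdNormalCDF_mul_stdNormalPDF_cocompact (f : ℝ → ℝ) :
    Tendsto (fun x => stdNormalCDF (f x) * stdNormalPDF x) (cocompact ℝ) (𝓝 0) :=
  squeeze_zero_norm (fun x => abs_stdNormalCDF_mul_stdNormalPDF_le (f x) x)
    tendsto_stdNormalPDF_cocompact

lemma integrable_mul_stdNormalCDF_mul_stdNormalPDF {f : ℝ → ℝ} (hf : Continuous f) :
    Integrable fun x => x * stdNormalCDF (f x) * stdNormalPDF x := by
  refine integrable_mul_stdNormalPDF.mono (by fun_prop) (ae_of_all _ fun x => ?_)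
  rw [mul_assoc, norm_mul, norm_mul x, norm_of_nonneg (stdNormalPDF_nonneg x)]
  exact mul_le_mul_of_nonneg_left (abs_stdNormalCDF_mul_stdNormalPDF_le (f x) x) (norm_nonneg x)

lemma stdNormalPDF_mul_stdNormalPDF {b c : ℝ} (hc : c ^ 2 = 1 + b ^ 2) (hc0 : c ≠ 0) (a x : ℝ) :
    stdNormalPDF (a + b * x) * stdNormalPDF x =
      stdNormalPDF (a / c) * stdNormalPDF (c * x + a * b / c) := by
  simp only [stdNormalPDF, div_mul_div_comm, ← exp_add]
  congr 2
  field_simp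
  linear_combination (c ^ 2 * x ^ 2 - a ^ 2) * hc

noncomputable def antiderivMulStdNormalCDFMulPDF (a b c y : ℝ) : ℝ :=
  b / c * stdNormalPDF (a / c) * stdNormalCDF (c * y + a * b / c) -
    stdNormalCDF (a + b * y) * stdNormalPDF y

lemma hasDerivAt_antiderivMulStdNormalCDFMulPDF {b c : ℝ} (hc : c ^ 2 = 1 + b ^ 2) (hc0 : c ≠ 0)
    (a x : ℝ) :
    HasDerivAt (antiderivMulStdNormalCDFMulPDF a b c)
      (x * stdNormalCDF (a + b * x) * stdNormalPDF x) x := by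
  have hinner : HasDerivAt (fun y => c * y + a * b / c) c x := by
    simpa using ((hasDerivAt_id x).const_mul c).add_const (a * b / c)
  have hshift : HasDerivAt (fun y => a + b * y) b x := by
    simpa using ((hasDerivAt_id x).const_mul b).const_add a
  have := (((hasDerivAt_stdNormalCDF _).comp x hinner).const_mul (b / c * stdNormalPDF (a / c))).sub
    (((hasDerivAt_stdNormalCDF _).comp x hshift).mul (hasDerivAt_stdNormalPDF x))
  refine this.congr_deriv ?_
  simp only [Function.comp_apply]
  linear_combination -b * stdNormalPDF_mul_stdNormalPDF hc hc0 a x +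
    stdNormalPDF (a / c) * stdNormalPDF (c * x + a * b / c) * div_mul_cancel₀ b hc0

section Limits

variable {c : ℝ} (hc : 0 < c) (a b : ℝ)
include hc

lemma tendsto_antiderivMulStdNormalCDFMulPDF_atBot :
    Tendsto (antiderivMulStdNormalCDFMulPDF a b c) atBot (𝓝 0) := by
  have hlin : Tendsto (fun y => c * y + a * b / c) atBot atBot :=
    tendsto_atBot_add_const_right _ _ (tendsto_id.const_mul_atBot hc)
  have := ((tendsto_stdNormalCDF_atBot.comp hlin).const_mul (b / c * stdNormalPDF (a / c))).sub
    ((tendsto_stdNormalCDF_mul_stdNormalPDF_cocompact (fun y => a + b * y)).mono_left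
      atBot_le_cocompact)
  rw [mul_zero, sub_zero] at this
  exact this

lemma tendsto_antiderivMulStdNormalCDFMulPDF_atTop :
    Tendsto (antiderivMulStdNormalCDFMulPDF a b c) atTop (𝓝 (b / c * stdNormalPDF (a / c))) := by
  have hlin : Tendsto (fun y => c * y + a * b / c) atTop atTop :=
    tendsto_atTop_add_const_right _ _ (tendsto_id.const_mul_atTop hc)
  have := ((tendsto_stdNormalCDF_atTop.comp hlin).const_mul (b / c * stdNormalPDF (a / c))).sub
    ((tendsto_stdNormalCDF_mul_stdNormalPDF_cocompact (fun y => a + b * y)).mono_left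
      atTop_le_cocompact)
  rw [mul_one, sub_zero] at this
  exact this

end Limits

theorem stmt2 (a b : ℝ) :
    ∫ x : ℝ, x * stdNormalCDF (a + b * x) * stdNormalPDF x =
      (b / Real.sqrt (1 + b ^ 2)) * stdNormalPDF (a / Real.sqrt (1 + b ^ 2)) := by
  set c := √(1 + b ^ 2)
  have hc : 0 < c := by positivity
  have hc2 : c ^ 2 = 1 + b ^ 2 := sq_sqrt (by positivity)
  rw [integral_of_hasDerivAt_of_tendsto (hasDerivAt_antiderivMulStdNormalCDFMulPDF hc2 hc.ne' a)
    (integrable_mul_stdNormalCDF_mul_stdNormalPDF (by fun_prop))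
    (tendsto_antiderivMulStdNormalCDFMulPDF_atBot hc a b)
    (tendsto_antiderivMulStdNormalCDFMulPDF_atTop hc a b), sub_zero]
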